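/- Let L be a solvable Lie algebra with fixed chief series 0 = A₀ < A₁ < … < A_n = L, U a subalgebra, and B a U-prefrattini subalgebra. Then dim B = Σ_{i ∉ I} (dim A_i − dim A_{i-1}), where I is the set of indices of non-U-Frattini chief factors. In particular all U-prefrattini subalgebras have the same dimension. -/

import Mathlib

open LieAlgebra

namespace Paper

variable {F : Type*} [Field F] {L : Type*} [LieRing L] [LieAlgebra F L]

/-- The interval `[U:L]` is complemented: every subalgebra containing `U`
has a complement over `U`. -/
def IsComplementedInterval (U : LieSubalgebra F L) : Prop :=
  ∀ S : LieSubalgebra F L, U ≤ S →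
    ∃ T : LieSubalgebra F L, U ≤ T ∧ S ⊓ T = U ∧ S ⊔ T = ⊤

/-- `Ω(U,L)`. -/
def Omega (U : LieSubalgebra F L) : Set (LieSubalgebra F L) :=
  {S | U ≤ S ∧ IsComplementedInterval S}

/-- `Ω(U,L)_min`, the inclusion-minimal elements. -/
def OmegaMin (U : LieSubalgebra F L) : Set (LieSubalgebra F L) :=
  {S | S ∈ Omega U ∧ ∀ T ∈ Omega U, T ≤ S → T = S}

/-- `φ(U,L)`, the intersection of all maximal subalgebras containing `U`. -/
def phi (U : LieSubalgebra F L) : LieSubalgebra F L :=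
  sInf {M : LieSubalgebra F L | IsCoatom M ∧ U ≤ M}

/-- A subalgebra which is an ideal of `L`. -/
def IsIdealSubalg (A : LieSubalgebra F L) : Prop :=
  ∀ x : L, ∀ a ∈ A, ⁅x, a⁆ ∈ A

/-- A minimal ideal of `L`. -/
def IsMinimalIdeal (A : LieSubalgebra F L) : Prop :=
  A ≠ ⊥ ∧ IsIdealSubalg A ∧
    ∀ B : LieSubalgebra F L, IsIdealSubalg B → B ≤ A → B = ⊥ ∨ B = A

/-- A chief series `0 = A 0 < A 1 < … < A n = L`. -/
def IsChiefSeries (A : ℕ → LieSubalgebra F L) (n : ℕ) : Prop :=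
  A 0 = ⊥ ∧ A n = ⊤ ∧ (∀ i, IsIdealSubalg (A i)) ∧
    ∀ i < n, A i < A (i + 1) ∧
      ∀ B : LieSubalgebra F L, IsIdealSubalg B → A i ≤ B → B ≤ A (i + 1) →
        B = A i ∨ B = A (i + 1)

/-- The chief factor `A/B` is `U`-Frattini. -/
def IsUFrattiniFactor (U B A : LieSubalgebra F L) : Prop :=
  A ≤ phi (U ⊔ B) ∨ U ⊔ B = ⊤

/-- `B` is a `U`-prefrattini subalgebra with respect to the series `A`. -/
def IsPrefrattiniWrt (U : LieSubalgebra F L) (A : ℕ → LieSubalgebra F L) (n : ℕ)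
    (B : LieSubalgebra F L) : Prop :=
  ∃ M : ℕ → LieSubalgebra F L,
    (∀ i < n, ¬ IsUFrattiniFactor U (A i) (A (i + 1)) →
      IsCoatom (M i) ∧ U ⊔ A i ≤ M i ∧ ¬ A (i + 1) ≤ M i) ∧
    B = ⨅ i ∈ {i | i < n ∧ ¬ IsUFrattiniFactor U (A i) (A (i + 1))}, M i

/-- `B` is a `U`-prefrattini subalgebra of `L` (with respect to some chief series). -/
def IsPrefrattini (U B : LieSubalgebra F L) : Prop :=
  ∃ (n : ℕ) (A : ℕ → LieSubalgebra F L), IsChiefSeries A n ∧ IsPrefrattiniWrt U A n B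

/-- The lower central series of an ideal `I` of `L` (computed inside `L`):
`idealLCS I k = I^{k+1}`. -/
def idealLCS (I : LieIdeal F L) : ℕ → LieIdeal F L
  | 0 => I
  | k + 1 => ⁅I, idealLCS I k⁆

/-- The nilpotent residual `L^∞`. -/
def nilpotentResidual (F : Type*) (L : Type*) [Field F] [LieRing L] [LieAlgebra F L] :
    LieIdeal F L :=
  ⨅ k, LieModule.lowerCentralSeries F L L k

/-- The exponential `exp (ad x)` truncated below `p` (all higher terms vanish when
`ad x` has nilpotency index at most `p`). -/
noncomputable def expAd (F : Type*) {L : Type*} [Field F] [LieRing L] [LieAlgebra F L]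
    (p : ℕ) (x : L) : L →ₗ[F] L :=
  ∑ r ∈ Finset.range p, (r.factorial : F)⁻¹ • ((LieAlgebra.ad F L x : Module.End F L) ^ r : Module.End F L)

/-- The quotient map `L → L ⧸ I` as a morphism of Lie algebras. -/
def quotLieHom (I : LieIdeal F L) : L →ₗ⁅F⁆ L ⧸ I :=
  { I.toSubmodule.mkQ with map_lie' := rfl }

end Paper

/-! Every chief factor `A (i+1) / A i` of a solvable Lie algebra is abelian, so a maximal
subalgebra `M i` containing `A i` but not `A (i+1)` satisfies `M i + A (i+1) = L` and
`M i ∩ A (i+1) = A i`; its codimension is therefore `dim A (i+1) - dim A i`. As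
`A (i+1) ≤ A j ≤ M j` for `j > i`, each `M i` is supplemented by the intersection of the later
`M j`, so codimensions add up along the intersection defining `B`. Subtracting from
`dim L = ∑ (dim A (i+1) - dim A i)` leaves the sum over the `U`-Frattini factors. -/

namespace Submodule

variable {K V : Type*} [DivisionRing K] [AddCommGroup V] [Module K V] [FiniteDimensional K V]

theorem finrank_inf_add_finrank_quotient_of_sup_eq_top {M C : Submodule K V} (h : M ⊔ C = ⊤) :
    Module.finrank K ↥(M ⊓ C) + Module.finrank K (V ⧸ M) = Module.finrank K C := by
  have hsup := finrank_sup_add_finrank_inf_eq M C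
  have hquot := M.finrank_quotient_add_finrank
  rw [h, finrank_top] at hsup
  omega

theorem finrank_finsetInf_add_sum_finrank_quotient {ι : Type*} [LinearOrder ι]
    (M N : ι → Submodule K V) (T : Finset ι) (hsup : ∀ i ∈ T, M i ⊔ N i = ⊤)
    (hle : ∀ i ∈ T, ∀ j ∈ T, i < j → N i ≤ M j) :
    Module.finrank K ↥(T.inf M) + ∑ i ∈ T, Module.finrank K (V ⧸ M i) = Module.finrank K V := by
  induction T using Finset.induction_on_min with
  | empty => rw [Finset.inf_empty, Finset.sum_empty, add_zero, finrank_top]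
  | insert a s ha ih =>
    have hNa : N a ≤ s.inf M := Finset.le_inf fun j hj =>
      hle a (s.mem_insert_self a) j (s.mem_insert_of_mem hj) (ha j hj)
    have hMa : M a ⊔ s.inf M = ⊤ :=
      top_le_iff.1 ((hsup a (s.mem_insert_self a)).ge.trans (sup_le_sup_left hNa _))
    have hs := ih (fun i hi => hsup i (s.mem_insert_of_mem hi))
      (fun i hi j hj => hle i (s.mem_insert_of_mem hi) j (s.mem_insert_of_mem hj))
    have hcodim := finrank_inf_add_finrank_quotient_of_sup_eq_top hMa
    rw [Finset.inf_insert, Finset.sum_insert fun has => lt_irrefl a (ha a has)]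
    omega

end Submodule

namespace LieIdeal

variable {R L : Type*} [CommRing R] [LieRing L] [LieAlgebra R L]

theorem toLieSubalgebra_le_toLieSubalgebra {I J : LieIdeal R L} :
    (I : LieSubalgebra R L) ≤ J ↔ I ≤ J :=
  Iff.rfl

theorem toLieSubalgebra_inj {I J : LieIdeal R L} : (I : LieSubalgebra R L) = J ↔ I = J := by
  simp only [le_antisymm_iff, toLieSubalgebra_le_toLieSubalgebra]

theorem le_sup_derivedSeriesOfIdeal {I J : LieIdeal R L} (h : J ≤ I ⊔ ⁅J, J⁆) (k : ℕ) :
    J ≤ I ⊔ LieAlgebra.derivedSeriesOfIdeal R L k J := by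
  induction k with
  | zero => exact le_sup_right
  | succ k ih =>
    set D := LieAlgebra.derivedSeriesOfIdeal R L k J
    have hlie : ⁅I ⊔ D, I ⊔ D⁆ ≤ I ⊔ ⁅D, D⁆ := by
      rw [LieSubmodule.sup_lie, LieSubmodule.lie_sup (I := D)]
      exact sup_le ((LieSubmodule.lie_le_left I _).trans le_sup_left)
        (sup_le_sup_right (LieSubmodule.lie_le_right I D) _)
    rw [LieAlgebra.derivedSeriesOfIdeal_succ]
    calc J ≤ I ⊔ ⁅J, J⁆ := h
      _ ≤ I ⊔ ⁅I ⊔ D, I ⊔ D⁆ := sup_le_sup_left (LieSubmodule.mono_lie ih ih) I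
      _ ≤ I ⊔ ⁅D, D⁆ := sup_le le_sup_left hlie

theorem lie_le_of_wcovBy [LieAlgebra.IsSolvable L] {I J : LieIdeal R L} (h : I ⩿ J) :
    ⁅J, J⁆ ≤ I := by
  rcases h.eq_or_eq le_sup_left (sup_le h.le (LieSubmodule.lie_le_left J J)) with hI | hJ
  · exact hI ▸ le_sup_right
  · obtain ⟨k, hk⟩ := LieAlgebra.IsSolvable.solvable (R := R) (L := L)
    have hD : LieAlgebra.derivedSeriesOfIdeal R L k J = ⊥ :=
      eq_bot_iff.2 (hk ▸ LieAlgebra.derivedSeriesOfIdeal_mono le_top k)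
    have hJI : J ≤ I := by simpa [hD] using le_sup_derivedSeriesOfIdeal hJ.ge k
    exact (LieSubmodule.lie_le_left J J).trans hJI

end LieIdeal

namespace LieSubalgebra

variable {R L : Type*} [CommRing R] [LieRing L] [LieAlgebra R L]

theorem mem_iInf {ι : Sort*} {K : ι → LieSubalgebra R L} {x : L} :
    x ∈ ⨅ i, K i ↔ ∀ i, x ∈ K i := by
  rw [iInf, ← SetLike.mem_coe, coe_sInf]
  simp

def supLieIdeal (K : LieSubalgebra R L) (J : LieIdeal R L) : LieSubalgebra R L :=
  { (K : Submodule R L) ⊔ (J : Submodule R L) with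
    lie_mem' := by
      rintro _ _ hx hy
      obtain ⟨m, hm, a, ha, rfl⟩ := Submodule.mem_sup.1 hx
      obtain ⟨m', hm', a', ha', rfl⟩ := Submodule.mem_sup.1 hy
      rw [add_lie, lie_add, add_assoc]
      exact add_mem (Submodule.mem_sup_left (K.lie_mem hm hm')) (Submodule.mem_sup_right
        (add_mem (J.lie_mem ha') (lie_mem_left R L J a _ ha))) }

theorem toSubmodule_sup_eq_top_of_isCoatom {K : LieSubalgebra R L} (hK : IsCoatom K)
    {J : LieIdeal R L} (hJK : ¬ (J : LieSubalgebra R L) ≤ K) :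
    (K : Submodule R L) ⊔ (J : Submodule R L) = ⊤ := by
  have hlt : K < K.supLieIdeal J :=
    lt_of_le_of_ne (fun x hx => Submodule.mem_sup_left hx)
      fun h => hJK fun x hx => h ▸ Submodule.mem_sup_right hx
  exact (congrArg toSubmodule (hK.2 _ hlt)).trans top_toSubmodule

/-- Since `K + J = L` and `[J, J] ⊆ I`, the intersection `K ∩ J` is an ideal between `I` and `J`. -/
theorem toSubmodule_inf_eq_of_isCoatom [LieAlgebra.IsSolvable L] {I J : LieIdeal R L}
    (hIJ : I ⩿ J) {K : LieSubalgebra R L} (hK : IsCoatom K) (hIK : (I : LieSubalgebra R L) ≤ K)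
    (hJK : ¬ (J : LieSubalgebra R L) ≤ K) :
    (K : Submodule R L) ⊓ (J : Submodule R L) = I := by
  have hideal : ∀ x y : L, y ∈ K ⊓ (J : LieSubalgebra R L) →
      ⁅x, y⁆ ∈ K ⊓ (J : LieSubalgebra R L) := by
    intro x y hy
    have hx : x ∈ (K : Submodule R L) ⊔ (J : Submodule R L) :=
      toSubmodule_sup_eq_top_of_isCoatom hK hJK ▸ Submodule.mem_top
    obtain ⟨m, hm, a, ha, rfl⟩ := Submodule.mem_sup.1 hx
    have hay : ⁅a, y⁆ ∈ I := LieIdeal.lie_le_of_wcovBy hIJ (LieSubmodule.lie_mem_lie ha hy.2)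
    rw [add_lie]
    exact add_mem ⟨K.lie_mem hm hy.1, J.lie_mem hy.2⟩ ⟨hIK hay, hIJ.le hay⟩
  obtain ⟨N, hN⟩ := (exists_lieIdeal_coe_eq_iff R _).2 hideal
  have hIN : I ≤ N := LieIdeal.toLieSubalgebra_le_toLieSubalgebra.1 (hN ▸ le_inf hIK hIJ.le)
  have hNJ : N ≤ J := LieIdeal.toLieSubalgebra_le_toLieSubalgebra.1 (hN ▸ inf_le_right)
  rcases hIJ.eq_or_eq hIN hNJ with rfl | rfl
  · rw [hN]
    rfl
  · exact absurd (hN ▸ inf_le_left) hJK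

theorem finrank_quotient_add_finrank_of_isCoatom {F : Type*} [Field F] [LieAlgebra F L]
    [LieAlgebra.IsSolvable L] [FiniteDimensional F L] {I J : LieIdeal F L} (hIJ : I ⩿ J)
    {K : LieSubalgebra F L} (hK : IsCoatom K) (hIK : (I : LieSubalgebra F L) ≤ K)
    (hJK : ¬ (J : LieSubalgebra F L) ≤ K) :
    Module.finrank F (L ⧸ (K : Submodule F L)) + Module.finrank F (I : Submodule F L) =
      Module.finrank F (J : Submodule F L) := by
  have h := Submodule.finrank_inf_add_finrank_quotient_of_sup_eq_top
    (toSubmodule_sup_eq_top_of_isCoatom hK hJK)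
  rwa [toSubmodule_inf_eq_of_isCoatom hIJ hK hIK hJK, add_comm] at h

end LieSubalgebra

namespace Paper

variable {F : Type*} [Field F] {L : Type*} [LieRing L] [LieAlgebra F L]
  {A : ℕ → LieSubalgebra F L} {n : ℕ}

theorem IsChiefSeries.le_of_le (hA : IsChiefSeries A n) {i j : ℕ} (hij : i ≤ j) (hjn : j ≤ n) :
    A i ≤ A j := by
  induction j, hij using Nat.le_induction with
  | base => exact le_rfl
  | succ j _ ih => exact (ih (by omega)).trans (hA.2.2.2 j (by omega)).1.le

theorem IsChiefSeries.exists_lieIdeal_wcovBy (hA : IsChiefSeries A n) {i : ℕ} (hi : i < n) :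
    ∃ I J : LieIdeal F L, I ⩿ J ∧ (I : LieSubalgebra F L) = A i ∧
      (J : LieSubalgebra F L) = A (i + 1) := by
  obtain ⟨-, -, hideal, hchief⟩ := hA
  obtain ⟨I, hI⟩ := (LieSubalgebra.exists_lieIdeal_coe_eq_iff F (A i)).2 (hideal i)
  obtain ⟨J, hJ⟩ := (LieSubalgebra.exists_lieIdeal_coe_eq_iff F (A (i + 1))).2 (hideal (i + 1))
  refine ⟨I, J, wcovBy_iff_le_and_eq_or_eq.2 ⟨?_, fun N hIN hNJ => ?_⟩, hI, hJ⟩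
  · rw [← LieIdeal.toLieSubalgebra_le_toLieSubalgebra, hI, hJ]
    exact (hchief i hi).1.le
  · rw [← LieIdeal.toLieSubalgebra_le_toLieSubalgebra, hI] at hIN
    rw [← LieIdeal.toLieSubalgebra_le_toLieSubalgebra, hJ] at hNJ
    simp only [← LieIdeal.toLieSubalgebra_inj, hI, hJ]
    exact (hchief i hi).2 N (fun _ _ ha => N.lie_mem ha) hIN hNJ

theorem IsChiefSeries.sum_range_finrank_sub [FiniteDimensional F L] (hA : IsChiefSeries A n) :
    ∑ i ∈ Finset.range n, (Module.finrank F (A (i + 1)) - Module.finrank F (A i)) =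
      Module.finrank F L := by
  suffices h : ∀ m ≤ n, ∑ i ∈ Finset.range m,
      (Module.finrank F (A (i + 1)) - Module.finrank F (A i)) = Module.finrank F (A m) by
    rw [h n le_rfl, hA.2.1]
    exact finrank_top F L
  intro m hm
  induction m with
  | zero =>
    rw [Finset.sum_range_zero, hA.1]
    exact (finrank_bot F L).symm
  | succ m ih =>
    have hmono : Module.finrank F (A m) ≤ Module.finrank F (A (m + 1)) :=
      Submodule.finrank_mono (hA.le_of_le m.le_succ hm)
    rw [Finset.sum_range_succ, ih (by omega)]
    omega

theorem IsChiefSeries.toSubmodule_sup_eq_top_of_isCoatom (hA : IsChiefSeries A n) (i : ℕ)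
    {M : LieSubalgebra F L} (hM : IsCoatom M) (hAM : ¬ A i ≤ M) :
    (M : Submodule F L) ⊔ (A i : Submodule F L) = ⊤ := by
  obtain ⟨J, hJ⟩ := (LieSubalgebra.exists_lieIdeal_coe_eq_iff F (A i)).2 (hA.2.2.1 i)
  rw [← hJ] at hAM ⊢
  exact LieSubalgebra.toSubmodule_sup_eq_top_of_isCoatom hM hAM

theorem IsChiefSeries.finrank_quotient_add_finrank_of_isCoatom [LieAlgebra.IsSolvable L]
    [FiniteDimensional F L] (hA : IsChiefSeries A n) {i : ℕ} (hi : i < n)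
    {M : LieSubalgebra F L} (hM : IsCoatom M) (hAM : A i ≤ M) (hAM' : ¬ A (i + 1) ≤ M) :
    Module.finrank F (L ⧸ (M : Submodule F L)) + Module.finrank F (A i) =
      Module.finrank F (A (i + 1)) := by
  obtain ⟨I, J, hIJ, hI, hJ⟩ := hA.exists_lieIdeal_wcovBy hi
  rw [← hI] at hAM ⊢
  rw [← hJ] at hAM' ⊢
  exact LieSubalgebra.finrank_quotient_add_finrank_of_isCoatom hIJ hM hAM hAM'

open scoped Classical in
theorem IsPrefrattiniWrt.finrank_eq [LieAlgebra.IsSolvable L] [FiniteDimensional F L]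
    {U B : LieSubalgebra F L} (hA : IsChiefSeries A n) (hB : IsPrefrattiniWrt U A n B) :
    Module.finrank F B =
      ∑ i ∈ (Finset.range n).filter (fun i => IsUFrattiniFactor U (A i) (A (i + 1))),
        (Module.finrank F (A (i + 1)) - Module.finrank F (A i)) := by
  obtain ⟨M, hM, rfl⟩ := hB
  set T := (Finset.range n).filter fun i => ¬ IsUFrattiniFactor U (A i) (A (i + 1))
  have hT : ∀ i ∈ T, i < n ∧ ¬ IsUFrattiniFactor U (A i) (A (i + 1)) := by
    simp [T]
  have hMT : ∀ i ∈ T, IsCoatom (M i) ∧ U ⊔ A i ≤ M i ∧ ¬ A (i + 1) ≤ M i := fun i hi =>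
    hM i (hT i hi).1 (hT i hi).2
  have hinf : ((⨅ i ∈ {i | i < n ∧ ¬ IsUFrattiniFactor U (A i) (A (i + 1))}, M i :
      LieSubalgebra F L) : Submodule F L) = T.inf fun i => (M i : Submodule F L) := by
    ext x
    simp [LieSubalgebra.mem_iInf, Submodule.mem_finsetInf, T]
  have hsup : ∀ i ∈ T, (M i : Submodule F L) ⊔ (A (i + 1) : Submodule F L) = ⊤ := fun i hi =>
    hA.toSubmodule_sup_eq_top_of_isCoatom (i + 1) (hMT i hi).1 (hMT i hi).2.2
  have hle : ∀ i ∈ T, ∀ j ∈ T, i < j → (A (i + 1) : Submodule F L) ≤ M j := fun i _ j hj hij =>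
    (LieSubalgebra.toSubmodule_le_toSubmodule _ _).2 <|
      (hA.le_of_le hij (hT j hj).1.le).trans (le_sup_right.trans (hMT j hj).2.1)
  have hcodim : ∀ i ∈ T, Module.finrank F (L ⧸ (M i : Submodule F L)) =
      Module.finrank F (A (i + 1)) - Module.finrank F (A i) := fun i hi => by
    obtain ⟨hcoatom, hUA, hAM⟩ := hMT i hi
    have := hA.finrank_quotient_add_finrank_of_isCoatom (hT i hi).1 hcoatom
      (le_sup_right.trans hUA) hAM
    omega
  have hdim := Submodule.finrank_finsetInf_add_sum_finrank_quotient _ _ T hsup hle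
  rw [← hinf, Finset.sum_congr rfl hcodim] at hdim
  have htot := hA.sum_range_finrank_sub
  rw [← Finset.sum_filter_add_sum_filter_not _ fun i => IsUFrattiniFactor U (A i) (A (i + 1))]
    at htot
  exact Nat.add_right_cancel (hdim.trans htot.symm)

end Paper

open scoped Classical in
theorem stmt11 {F : Type*} [Field F] {L : Type*} [LieRing L] [LieAlgebra F L]
    [LieAlgebra.IsSolvable L] [FiniteDimensional F L]
    (U : LieSubalgebra F L) (n : ℕ) (A : ℕ → LieSubalgebra F L)
    (hA : Paper.IsChiefSeries A n) (B : LieSubalgebra F L)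
    (hB : Paper.IsPrefrattiniWrt U A n B) :
    (Module.finrank F B =
      ∑ i ∈ (Finset.range n).filter (fun i => Paper.IsUFrattiniFactor U (A i) (A (i + 1))),
        (Module.finrank F (A (i + 1)) - Module.finrank F (A i))) ∧
    (∀ B' : LieSubalgebra F L, Paper.IsPrefrattiniWrt U A n B' →
      Module.finrank F B' = Module.finrank F B) :=
  ⟨hB.finrank_eq hA, fun _ hB' => (hB'.finrank_eq hA).trans (hB.finrank_eq hA).symm⟩
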